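/- For all x > 0, exp(x·ψ(x/log(x+1))) ≤ Γ(x+1) ≤ exp(x·ψ(x/2 + 1)). -/

import Mathlib

noncomputable def psi (x : ℝ) : ℝ := deriv Real.Gamma x / Real.Gamma x

/-!
Put `L(a, b) = (b - a) / (log b - log a)`, the logarithmic mean. By Euler's limit formula,
`log Γ(b) - log Γ(a)` is the limit of `(b - a) log n - ∑_{m ≤ n} (b - a) / L(a + m, b + m)`, while
Gauss's formula gives `ψ(c)` as the limit of `log n - ∑_{m ≤ n} 1 / (c + m)`. Since
`L(a, b) + m ≤ L(a + m, b + m) ≤ (a + b) / 2 + m`, comparing the sums term by term yields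
`(b - a) ψ(L(a, b)) ≤ log Γ(b) - log Γ(a) ≤ (b - a) ψ((a + b) / 2)`; take `a = 1`, `b = x + 1`.
Gauss's formula itself holds because `log n - ∑_{m ≤ n} 1 / (c + m)` is the derivative at `c` of
the convex Euler approximant of `log Γ`.
-/

open Real Filter Topology Finset

noncomputable def logMean (a b : ℝ) : ℝ := (b - a) / (log b - log a)

section LogMean

variable {a b : ℝ}

lemma logMean_pos (ha : 0 < a) (hab : a < b) : 0 < logMean a b :=
  div_pos (sub_pos.2 hab) (sub_pos.2 (log_lt_log ha hab))

lemma log_sub_log_eq_div_logMean (hab : a < b) : log b - log a = (b - a) / logMean a b := by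
  rw [logMean, div_div_cancel₀ (sub_pos.2 hab).ne']

-- The first term of the series `Real.hasSum_log_one_add`.
lemma two_mul_div_add_two_le_log_one_add {t : ℝ} (ht : 0 ≤ t) :
    2 * t / (t + 2) ≤ log (1 + t) := by
  simpa [mul_div_assoc] using le_hasSum (hasSum_log_one_add ht) 0 fun k _ => by positivity

lemma logMean_le_add_div_two (ha : 0 < a) (hab : a < b) : logMean a b ≤ (a + b) / 2 := by
  have hb : 0 < b := ha.trans hab
  have h := two_mul_div_add_two_le_log_one_add (div_nonneg (sub_pos.2 hab).le ha.le)
  rw [one_add_div ha.ne', add_sub_cancel, log_div hb.ne' ha.ne',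
    log_sub_log_eq_div_logMean hab] at h
  have e : 2 * ((b - a) / a) / ((b - a) / a + 2) = 2 * (b - a) / (a + b) := by
    rw [div_add' _ _ _ ha.ne', mul_div_assoc', div_div_div_cancel_right₀ ha.ne']
    ring
  rw [e, div_le_div_iff₀ (by linarith) (logMean_pos ha hab)] at h
  nlinarith

-- The geometric mean is at most the logarithmic mean: with `y = log (b / a) / 2` this is
-- `y ≤ sinh y`.
lemma sq_log_sub_log_mul_le (ha : 0 < a) (hab : a ≤ b) :
    (log b - log a) ^ 2 * (a * b) ≤ (b - a) ^ 2 := by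
  have hb : 0 < b := ha.trans_le hab
  set y := (log b - log a) / 2 with hy_def
  have hy : 0 ≤ y := div_nonneg (sub_nonneg.2 (log_le_log ha hab)) zero_le_two
  have hsinh : 2 * y ≤ exp y - exp (-y) := by
    have := self_le_sinh_iff.2 hy
    rw [sinh_eq] at this
    linarith
  have hp : exp y ^ 2 * a = b := by
    rw [sq, ← exp_add, show y + y = log b - log a by ring, exp_sub, exp_log hb, exp_log ha,
      div_mul_cancel₀ _ ha.ne']
  have hq : exp (-y) ^ 2 * b = a := by
    rw [sq, ← exp_add, show -y + -y = log a - log b by ring, exp_sub, exp_log hb, exp_log ha,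
      div_mul_cancel₀ _ hb.ne']
  have hpq : exp y * exp (-y) = 1 := by rw [← exp_add, add_neg_cancel, exp_zero]
  calc (log b - log a) ^ 2 * (a * b) = (2 * y) ^ 2 * (a * b) := by rw [hy_def]; ring
    _ ≤ (exp y - exp (-y)) ^ 2 * (a * b) := by gcongr
    _ = (b - a) ^ 2 := by linear_combination b * hp + a * hq - 2 * a * b * hpq

lemma hasDerivAt_logMean_add (ha : 0 < a) (hab : a < b) {s : ℝ} (hs : 0 ≤ s) :
    HasDerivAt (fun t => logMean (a + t) (b + t))
      ((b - a) ^ 2 / ((a + s) * (b + s) * (log (b + s) - log (a + s)) ^ 2)) s := by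
  have has : 0 < a + s := by linarith
  have hbs : 0 < b + s := by linarith
  have hg : HasDerivAt (fun t => log (b + t) - log (a + t)) (1 / (b + s) - 1 / (a + s)) s :=
    (((hasDerivAt_id' s).const_add b).log hbs.ne').sub
      (((hasDerivAt_id' s).const_add a).log has.ne')
  have hpos : 0 < log (b + s) - log (a + s) := sub_pos.2 (log_lt_log has (by linarith))
  have e : (fun t => logMean (a + t) (b + t)) =
      fun t => (b - a) / (log (b + t) - log (a + t)) := by
    funext t; rw [logMean, add_sub_add_right_eq_sub]
  rw [e]
  exact ((hasDerivAt_const s (b - a)).div hg hpos.ne').congr_deriv (by field_simp; ring)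

-- The derivative of `t ↦ logMean (a + t) (b + t)` is (logarithmic mean / geometric mean) ^ 2.
lemma logMean_add_le_logMean_add (ha : 0 < a) (hab : a < b) {t : ℝ} (ht : 0 ≤ t) :
    logMean a b + t ≤ logMean (a + t) (b + t) := by
  have hderiv := fun s (hs : s ∈ Set.Ici (0 : ℝ)) =>
    (hasDerivAt_logMean_add ha hab hs).sub (hasDerivAt_id' s)
  have hmono : MonotoneOn (fun s => logMean (a + s) (b + s) - s) (Set.Ici 0) := by
    refine monotoneOn_of_hasDerivWithinAt_nonneg (convex_Ici 0)
      (fun s hs => (hderiv s hs).continuousAt.continuousWithinAt)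
      (fun s hs => (hderiv s (interior_subset hs)).hasDerivWithinAt) fun s hs => ?_
    have hs : 0 < s := by simpa using hs
    have has : 0 < a + s := by linarith
    have hgm := sq_log_sub_log_mul_le has (by linarith : a + s ≤ b + s)
    rw [add_sub_add_right_eq_sub] at hgm
    have hlog : 0 < log (b + s) - log (a + s) := sub_pos.2 (log_lt_log has (by linarith))
    rw [sub_nonneg, one_le_div₀ (mul_pos (mul_pos has (by linarith)) (pow_pos hlog 2))]
    linarith
  have := hmono Set.self_mem_Ici ht ht
  simp only [add_zero, sub_zero] at this
  linarith

end LogMean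

-- `D n` is a subgradient of `G n` at `c`, so it lies between the one-sided difference quotients of
-- `G n`, which converge to those of `F`.
theorem tendsto_of_hasDerivAt_of_forall_mul_le_sub {F : ℝ → ℝ} {G : ℕ → ℝ → ℝ} {D : ℕ → ℝ}
    {s : Set ℝ} {c F' : ℝ} (hs : s ∈ 𝓝 c) (hF : HasDerivAt F F' c)
    (hG : ∀ y ∈ s, Tendsto (fun n => G n y) atTop (𝓝 (F y)))
    (hD : ∀ n, ∀ y ∈ s, (y - c) * D n ≤ G n y - G n c) :
    Tendsto D atTop (𝓝 F') := by
  have hslope := hasDerivAt_iff_tendsto_slope.1 hF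
  have hGslope : ∀ y ∈ s, Tendsto (fun n => slope (G n) c y) atTop (𝓝 (slope F c y)) :=
    fun y hy => by
      simp only [slope_def_field]
      exact ((hG y hy).sub (hG c (mem_of_mem_nhds hs))).div_const _
  refine tendsto_order.2 ⟨fun l hl => ?_, fun u hu => ?_⟩
  · obtain ⟨y, ⟨hyl, hys⟩, hyc⟩ : ∃ y, (l < slope F c y ∧ y ∈ s) ∧ y < c :=
      (((hslope.mono_left (nhdsLT_le_nhdsNE c)).eventually (lt_mem_nhds hl)).and
        (mem_nhdsWithin_of_mem_nhds hs)).and self_mem_nhdsWithin |>.exists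
    filter_upwards [(hGslope y hys).eventually (lt_mem_nhds hyl)] with n hn
    rw [slope_def_field] at hn
    exact hn.trans_le ((div_le_iff_of_neg (sub_neg.2 hyc)).2 (by linarith [hD n y hys]))
  · obtain ⟨y, ⟨hyu, hys⟩, hyc⟩ : ∃ y, (slope F c y < u ∧ y ∈ s) ∧ c < y :=
      (((hslope.mono_left (nhdsGT_le_nhdsNE c)).eventually (gt_mem_nhds hu)).and
        (mem_nhdsWithin_of_mem_nhds hs)).and self_mem_nhdsWithin |>.exists
    filter_upwards [(hGslope y hys).eventually (gt_mem_nhds hyu)] with n hn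
    rw [slope_def_field] at hn
    exact lt_of_le_of_lt ((le_div_iff₀ (sub_pos.2 hyc)).2 (by linarith [hD n y hys])) hn

noncomputable def digammaSeq (c : ℝ) (n : ℕ) : ℝ := log n - ∑ m ∈ range (n + 1), 1 / (c + m)

open BohrMollerup in
lemma logGammaSeq_sub_logGammaSeq_sub_mul_digammaSeq (a b c : ℝ) (n : ℕ) :
    logGammaSeq b n - logGammaSeq a n - (b - a) * digammaSeq c n =
      ∑ m ∈ range (n + 1), ((b - a) / (c + m) - (log (b + m) - log (a + m))) := by
  simp only [logGammaSeq, digammaSeq, mul_sub, mul_sum, sum_sub_distrib, mul_one_div]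
  ring

lemma log_sub_log_le_sub_div {u v : ℝ} (hu : 0 < u) (hv : 0 < v) :
    log v - log u ≤ (v - u) / u := by
  rw [← log_div hv.ne' hu.ne', sub_div, div_self hu.ne']
  exact log_le_sub_one_of_pos (div_pos hv hu)

open BohrMollerup in
lemma mul_digammaSeq_le_logGammaSeq_sub {a b : ℝ} (ha : 0 < a) (hb : 0 < b) (n : ℕ) :
    (b - a) * digammaSeq a n ≤ logGammaSeq b n - logGammaSeq a n := by
  rw [← sub_nonneg, logGammaSeq_sub_logGammaSeq_sub_mul_digammaSeq]
  refine sum_nonneg fun m _ => sub_nonneg.2 ?_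
  simpa [add_sub_add_right_eq_sub] using
    log_sub_log_le_sub_div (by positivity : 0 < a + m) (by positivity : 0 < b + m)

lemma hasDerivAt_log_Gamma {c : ℝ} (hc : 0 < c) :
    HasDerivAt (fun y => log (Gamma y)) (psi c) c :=
  (differentiableAt_Gamma fun m => by linarith [(m.cast_nonneg : (0 : ℝ) ≤ m)]).hasDerivAt.log
    (Gamma_pos_of_pos hc).ne'

lemma tendsto_digammaSeq {c : ℝ} (hc : 0 < c) : Tendsto (digammaSeq c) atTop (𝓝 (psi c)) :=
  tendsto_of_hasDerivAt_of_forall_mul_le_sub (Ioi_mem_nhds hc) (hasDerivAt_log_Gamma hc)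
    (fun _ hy => BohrMollerup.tendsto_log_gamma hy)
    fun n _ hy => mul_digammaSeq_le_logGammaSeq_sub hc hy n

section GammaBounds

variable {a b c : ℝ}

lemma mul_psi_le_log_Gamma_sub (ha : 0 < a) (hab : a < b) (hc : 0 < c)
    (h : ∀ m : ℕ, c + m ≤ logMean (a + m) (b + m)) :
    (b - a) * psi c ≤ log (Gamma b) - log (Gamma a) := by
  refine le_of_tendsto_of_tendsto' ((tendsto_digammaSeq hc).const_mul _)
    ((BohrMollerup.tendsto_log_gamma (ha.trans hab)).sub (BohrMollerup.tendsto_log_gamma ha))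
    fun n => sub_nonneg.1 ?_
  rw [logGammaSeq_sub_logGammaSeq_sub_mul_digammaSeq]
  refine sum_nonneg fun m _ => sub_nonneg.2 ?_
  rw [log_sub_log_eq_div_logMean (by linarith : a + m < b + m), add_sub_add_right_eq_sub]
  exact div_le_div_of_nonneg_left (sub_pos.2 hab).le (by positivity) (h m)

lemma log_Gamma_sub_le_mul_psi (ha : 0 < a) (hab : a < b) (hc : 0 < c)
    (h : ∀ m : ℕ, logMean (a + m) (b + m) ≤ c + m) :
    log (Gamma b) - log (Gamma a) ≤ (b - a) * psi c := by
  refine le_of_tendsto_of_tendsto'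
    ((BohrMollerup.tendsto_log_gamma (ha.trans hab)).sub (BohrMollerup.tendsto_log_gamma ha))
    ((tendsto_digammaSeq hc).const_mul _) fun n => sub_nonpos.1 ?_
  rw [logGammaSeq_sub_logGammaSeq_sub_mul_digammaSeq]
  refine sum_nonpos fun m _ => sub_nonpos.2 ?_
  have ham : 0 < a + m := by positivity
  rw [log_sub_log_eq_div_logMean (by linarith : a + m < b + m), add_sub_add_right_eq_sub]
  exact div_le_div_of_nonneg_left (sub_pos.2 hab).le (logMean_pos ham (by linarith)) (h m)

theorem mul_psi_logMean_le_log_Gamma_sub (ha : 0 < a) (hab : a < b) :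
    (b - a) * psi (logMean a b) ≤ log (Gamma b) - log (Gamma a) :=
  mul_psi_le_log_Gamma_sub ha hab (logMean_pos ha hab) fun m =>
    logMean_add_le_logMean_add ha hab m.cast_nonneg

theorem log_Gamma_sub_le_mul_psi_add_div_two (ha : 0 < a) (hab : a < b) :
    log (Gamma b) - log (Gamma a) ≤ (b - a) * psi ((a + b) / 2) :=
  log_Gamma_sub_le_mul_psi ha hab (by linarith) fun m =>
    (logMean_le_add_div_two (by positivity) (by linarith)).trans_eq (by ring)

end GammaBounds

theorem stmt_18 (x : ℝ) (hx : 0 < x) :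
    Real.exp (x * psi (x / Real.log (x + 1))) ≤ Real.Gamma (x + 1) ∧
    Real.Gamma (x + 1) ≤ Real.exp (x * psi (x/2 + 1)) := by
  have h1 : (1 : ℝ) < x + 1 := by linarith
  have lower := mul_psi_logMean_le_log_Gamma_sub one_pos h1
  have upper := log_Gamma_sub_le_mul_psi_add_div_two one_pos h1
  rw [show (1 + (x + 1)) / 2 = x / 2 + 1 by ring] at upper
  simp only [logMean, log_one, Gamma_one, sub_zero, add_sub_cancel_right] at lower upper
  rw [← exp_log (Gamma_pos_of_pos (by linarith : 0 < x + 1))]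
  exact ⟨exp_le_exp.2 lower, exp_le_exp.2 upper⟩
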